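/- arXiv:1106.2419 — 3 statements merged into one kernel-verified Lean document; each statement's English description precedes it below -/
import Mathlib

section
/- Let n be a positive integer, 0 < ε < 1/4, and let u ∈ Mₙ(ℂ) with ‖u*u − Iₙ‖ < ε and ‖uu* − Iₙ‖ < ε. Then there is a continuous path (u_t)_{t∈[0,1]} in Mₙ(ℂ) with u_0 = u, u_1 = Iₙ, and ‖u_t* u_t − Iₙ‖ < ε, ‖u_t u_t* − Iₙ‖ < ε for all t ∈ [0,1]. -/
/-!
Polar decomposition. Writing `c = (u*u)⁻¹`, the path `s ↦ u (s c + (1 - s))^{1/2}` runs from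
`u` to the unitary `u |u|⁻¹`, and along it `u_s* u_s = (1 - s) u*u + s` and
`u_s u_s* = (1 - s) uu* + s`, whose distances to `1` only shrink as `s` grows. The unitary
endpoint is then joined to `1` inside the unitary group: the spectrum of a unitary matrix is
finite, so a scalar rotation moves it off `-1`, and a unitary whose spectrum avoids `-1` lies
within distance `2` of `1`, where the principal logarithm provides a path.
-/

lemma isUnit_of_isUnit_mul_of_isUnit_mul {M : Type*} [Monoid M] {a b c : M}
    (hab : IsUnit (a * b)) (hca : IsUnit (c * a)) : IsUnit a := by
  obtain ⟨x, hx⟩ := hab.exists_right_inv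
  obtain ⟨y, hy⟩ := hca.exists_left_inv
  exact isUnit_iff_exists_and_exists.2
    ⟨⟨b * x, by rw [← mul_assoc, hx]⟩, ⟨y * c, by rw [mul_assoc, hy]⟩⟩

lemma isUnit_of_norm_sub_one_lt_one {R : Type*} [NormedRing R] [HasSummableGeomSeries R] {x : R}
    (h : ‖x - 1‖ < 1) : IsUnit x := by
  by_contra hx
  exact nonunits.subset_compl_ball hx (mem_ball_iff_norm.2 h)

section Polar

open AffineMap unitInterval CFC

lemma dist_lineMap_right_le {E : Type*} [SeminormedAddCommGroup E] [NormedSpace ℝ E] (a b : E)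
    {s : ℝ} (hs : s ∈ I) : dist (lineMap a b s) b ≤ dist a b := by
  rw [dist_lineMap_right, Real.norm_of_nonneg (one_minus_nonneg ⟨s, hs⟩)]
  exact mul_le_of_le_one_left dist_nonneg (by linarith [hs.1])

namespace Units

variable {M : Type*} [Monoid M] [StarMul M] (u : Mˣ)

lemma star_mul_self_mul_inv_mul_star_inv :
    star (u : M) * u * (↑u⁻¹ * star ↑u⁻¹) = 1 := by
  rw [mul_assoc, ← mul_assoc (u : M), mul_inv, one_mul, ← star_mul, inv_mul, star_one]

lemma inv_mul_star_inv_mul_star_mul_self :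
    (↑u⁻¹ * star ↑u⁻¹) * (star (u : M) * u) = 1 := by
  rw [mul_assoc, ← mul_assoc (star _), ← star_mul, mul_inv, star_one, one_mul, inv_mul]

lemma mul_inv_mul_star_inv_mul_star :
    (u : M) * (↑u⁻¹ * star ↑u⁻¹) * star ↑u = 1 := by
  rw [← mul_assoc, mul_inv, one_mul, ← star_mul, mul_inv, star_one]

end Units

variable {A : Type*} [CStarAlgebra A] [PartialOrder A] [StarOrderedRing A]

lemma lineMap_nonneg {a b : A} (ha : 0 ≤ a) (hb : 0 ≤ b) {s : ℝ} (hs : s ∈ I) :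
    0 ≤ lineMap a b s := by
  rw [lineMap_apply_module]
  exact add_nonneg (smul_nonneg (one_minus_nonneg ⟨s, hs⟩) ha) (smul_nonneg hs.1 hb)

namespace Units

noncomputable def polarPath (u : Aˣ) :
    Path (u : A) ((u : A) * sqrt (↑u⁻¹ * star (↑u⁻¹ : A))) where
  toFun s := u * sqrt (lineMap 1 (↑u⁻¹ * star (↑u⁻¹ : A)) (s : ℝ))
  continuous_toFun := by
    refine continuous_const.mul (continuousOn_sqrt.comp_continuous (by fun_prop) fun s => ?_)
    exact lineMap_nonneg zero_le_one (mul_star_self_nonneg _) s.2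
  source' := by simp
  target' := by simp

lemma polarPath_apply (u : Aˣ) (s : I) :
    u.polarPath s = u * sqrt (lineMap 1 (↑u⁻¹ * star (↑u⁻¹ : A)) (s : ℝ)) :=
  rfl

lemma star_polarPath_mul_self (u : Aˣ) (s : I) :
    star (u.polarPath s) * u.polarPath s = lineMap (star (u : A) * u) 1 (s : ℝ) := by
  rw [polarPath_apply]
  set c : A := ↑u⁻¹ * star ↑u⁻¹
  have hc : 0 ≤ lineMap 1 c (s : ℝ) := lineMap_nonneg zero_le_one (mul_star_self_nonneg _) s.2
  set h := sqrt (lineMap 1 c (s : ℝ))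
  have hcomm : Commute h (star (u : A) * u) := by
    rw [show h = _ from sqrt_eq_cfc]
    refine Commute.cfc_nnreal ?_ _
    rw [lineMap_apply_module]
    exact ((Commute.one_left _).smul_left _).add_left <|
      (show Commute c (star (u : A) * u) from u.inv_mul_star_inv_mul_star_mul_self.trans
        u.star_mul_self_mul_inv_mul_star_inv.symm).smul_left _
  calc star (↑u * h) * (↑u * h) = h * (star ↑u * ↑u) * h := by
        rw [star_mul, (sqrt_nonneg _).isSelfAdjoint.star_eq]; simp only [mul_assoc]
    _ = star ↑u * ↑u * (h * h) := by rw [hcomm.eq, mul_assoc]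
    _ = lineMap (star (u : A) * u) 1 (s : ℝ) := by
      rw [sqrt_mul_sqrt_self _ hc]
      simp only [lineMap_apply_module, mul_add, mul_smul_comm, mul_one, c,
        u.star_mul_self_mul_inv_mul_star_inv]

lemma polarPath_mul_star_self (u : Aˣ) (s : I) :
    u.polarPath s * star (u.polarPath s) = lineMap ((u : A) * star ↑u) 1 (s : ℝ) := by
  rw [polarPath_apply]
  have hc : 0 ≤ lineMap 1 (↑u⁻¹ * star (↑u⁻¹ : A)) (s : ℝ) :=
    lineMap_nonneg zero_le_one (mul_star_self_nonneg _) s.2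
  set h := sqrt (lineMap 1 (↑u⁻¹ * star (↑u⁻¹ : A)) (s : ℝ))
  calc ↑u * h * star (↑u * h) = ↑u * (h * h) * star ↑u := by
        rw [star_mul, (sqrt_nonneg _).isSelfAdjoint.star_eq]; simp only [mul_assoc]
    _ = lineMap ((u : A) * star ↑u) 1 (s : ℝ) := by
      rw [sqrt_mul_sqrt_self _ hc]
      simp only [lineMap_apply_module, mul_add, add_mul, mul_smul_comm, smul_mul_assoc, mul_one,
        u.mul_inv_mul_star_inv_mul_star]

lemma mul_sqrt_inv_mul_star_inv_mem_unitary (u : Aˣ) :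
    (u : A) * sqrt (↑u⁻¹ * star (↑u⁻¹ : A)) ∈ unitary A := by
  rw [← u.polarPath.target, Unitary.mem_iff, star_polarPath_mul_self, polarPath_mul_star_self]
  simp

end Units

end Polar

section UnitaryPath

open Complex selfAdjoint

variable {A : Type*} [CStarAlgebra A]

lemma selfAdjoint.expUnitary_smul_one_coe (θ : ℝ) :
    (expUnitary (θ • 1 : selfAdjoint A) : A) = algebraMap ℂ A (exp (θ * I)) := by
  rw [expUnitary_coe, exp_eq_exp_ℂ, NormedSpace.algebraMap_exp_comm]
  congr 1
  simp [Algebra.algebraMap_eq_smul_one, mul_smul, smul_comm I θ]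

lemma Unitary.joined_one_of_notMem_spectrum (u : unitary A) {z : ℂ} (hz : ‖z‖ = 1)
    (hzu : z ∉ spectrum ℂ (u : A)) : Joined 1 u := by
  obtain ⟨r, hr_joined, hr⟩ :
      ∃ r : unitary A, Joined 1 r ∧ (r : A) = algebraMap ℂ A (-z) := by
    refine ⟨_, joined_one_expUnitary ((-z).arg • 1), ?_⟩
    rw [expUnitary_smul_one_coe]
    simpa [hz] using congr(algebraMap ℂ A $(norm_mul_exp_arg_mul_I (-z)))
  have hz0 : -z ≠ 0 := by simp [← norm_ne_zero_iff, hz]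
  have hv : ((star r * u : unitary A) : A) = (-z)⁻¹ • (u : A) := by
    rw [Submonoid.coe_mul, Unitary.coe_star, hr, ← algebraMap_star_comm, ← Algebra.smul_def]
    congr 1
    rw [inv_def]
    simp [normSq_eq_norm_sq, hz]
  have hv_spec : -1 ∉ spectrum ℂ ((star r * u : unitary A) : A) := by
    rw [hv, ← Units.smul_mk0 (inv_ne_zero hz0), spectrum.unit_smul_eq_smul]
    rwa [Set.mem_smul_set_iff_inv_smul_mem, Units.smul_def, Units.val_inv_eq_inv_val,
      Units.val_mk0, inv_inv, smul_eq_mul, mul_neg_one, neg_neg]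
  have := hr_joined.mul
    (Unitary.joined 1 _ ((Unitary.norm_sub_one_lt_two_iff (star r * u).2).2 hv_spec))
  simpa [← mul_assoc] using this

lemma Unitary.joined_one_of_finite_spectrum (u : unitary A) (h : (spectrum ℂ (u : A)).Finite) :
    Joined 1 u := by
  have hS : (Metric.sphere (0 : ℂ) 1).Infinite :=
    (isConnected_sphere (by simp) 0 zero_le_one).isPreconnected.infinite_of_nontrivial
      ⟨1, by simp, -1, by simp, by norm_num⟩
  obtain ⟨z, hz, hzu⟩ := (hS.sdiff h).nonempty
  exact joined_one_of_notMem_spectrum u (mem_sphere_zero_iff_norm.1 hz) hzu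

end UnitaryPath

theorem CStarAlgebra.exists_path_one_of_isUnit {A : Type*} [CStarAlgebra A]
    [PathConnectedSpace (unitary A)] {u : A} (hu : IsUnit u) :
    ∃ γ : Path u 1, ∀ t, ‖star (γ t) * γ t - 1‖ ≤ ‖star u * u - 1‖ ∧
      ‖γ t * star (γ t) - 1‖ ≤ ‖u * star u - 1‖ := by
  let _ := CStarAlgebra.spectralOrder A
  let _ := CStarAlgebra.spectralOrderedRing A
  obtain ⟨u, rfl⟩ := hu
  let w : unitary A := ⟨_, u.mul_sqrt_inv_mul_star_inv_mem_unitary⟩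
  let ρ : Path (w : A) 1 := (PathConnectedSpace.somePath w 1).map continuous_subtype_val
  refine ⟨u.polarPath.trans ρ, fun t => ?_⟩
  have ht : (u.polarPath.trans ρ) t ∈ Set.range u.polarPath ∪ Set.range ρ := by
    rw [← Path.trans_range]; exact Set.mem_range_self t
  rcases ht with ⟨s, hs⟩ | ⟨s, hs⟩
  · rw [← hs, Units.star_polarPath_mul_self, Units.polarPath_mul_star_self]
    simp only [← dist_eq_norm]
    exact ⟨dist_lineMap_right_le _ _ s.2, dist_lineMap_right_le _ _ s.2⟩
  · have hρ : ρ s ∈ unitary A := (PathConnectedSpace.somePath w 1 s).2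
    rw [← hs, Unitary.star_mul_self_of_mem hρ, Unitary.mul_star_self_of_mem hρ, sub_self,
      norm_zero]
    exact ⟨norm_nonneg _, norm_nonneg _⟩

open scoped Matrix.Norms.L2Operator

instance Matrix.instPathConnectedSpaceUnitary {n : Type*} [Fintype n] [DecidableEq n] :
    PathConnectedSpace (unitary (Matrix n n ℂ)) where
  nonempty := ⟨1⟩
  joined u v := (Unitary.joined_one_of_finite_spectrum u (Matrix.finite_spectrum _)).symm.trans
    (Unitary.joined_one_of_finite_spectrum v (Matrix.finite_spectrum _))

theorem stmt12_general {n : ℕ} {ε : ℝ} (hε : ε < 1 / 4)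
    {u : Matrix (Fin n) (Fin n) ℂ}
    (hu1 : ‖u.conjTranspose * u - 1‖ < ε) (hu2 : ‖u * u.conjTranspose - 1‖ < ε) :
    ∃ f : ℝ → Matrix (Fin n) (Fin n) ℂ, Continuous f ∧
      f 0 = u ∧ f 1 = 1 ∧
      ∀ t ∈ Set.Icc (0 : ℝ) 1,
        ‖(f t).conjTranspose * f t - 1‖ < ε ∧ ‖f t * (f t).conjTranspose - 1‖ < ε := by
  simp only [← Matrix.star_eq_conjTranspose] at *
  have hu : IsUnit u := isUnit_of_isUnit_mul_of_isUnit_mul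
    (isUnit_of_norm_sub_one_lt_one (hu2.trans (by linarith)))
    (isUnit_of_norm_sub_one_lt_one (hu1.trans (by linarith)))
  obtain ⟨γ, hγ⟩ := CStarAlgebra.exists_path_one_of_isUnit hu
  refine ⟨γ.extend, γ.continuous_extend, γ.extend_zero, γ.extend_one, fun t ht => ?_⟩
  rw [γ.extend_apply ht]
  exact ⟨(hγ _).1.trans_lt hu1, (hγ _).2.trans_lt hu2⟩

/-- Let `n` be a positive integer, `0 < ε < 1/4`, and let `u ∈ Mₙ(ℂ)` with `‖u*u − Iₙ‖ < ε`
and `‖uu* − Iₙ‖ < ε` (operator norm).  Then there is a continuous path `(u t)` in `Mₙ(ℂ)` with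
`u 0 = u`, `u 1 = Iₙ`, and `‖u t* u t − Iₙ‖ < ε`, `‖u t u t* − Iₙ‖ < ε` for all `t ∈ [0,1]`. -/
theorem stmt12 {n : ℕ} (hn : 0 < n) {ε : ℝ} (hε0 : 0 < ε) (hε : ε < 1 / 4)
    {u : Matrix (Fin n) (Fin n) ℂ}
    (hu1 : ‖u.conjTranspose * u - 1‖ < ε) (hu2 : ‖u * u.conjTranspose - 1‖ < ε) :
    ∃ f : ℝ → Matrix (Fin n) (Fin n) ℂ, Continuous f ∧
      f 0 = u ∧ f 1 = 1 ∧
      ∀ t ∈ Set.Icc (0 : ℝ) 1,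
        ‖(f t).conjTranspose * f t - 1‖ < ε ∧ ‖f t * (f t).conjTranspose - 1‖ < ε :=
  stmt12_general hε hu1 hu2
end

section
/- Let A be a unital C*-algebra, 0 < ε < 1/12, and let u ∈ A be an ε-unitary. Then in M₂(A), the path t ↦ diag(1, u) · R_t · diag(1, u*) · R_t*, where R_t is the rotation matrix [[cos(πt/2), −sin(πt/2)],[sin(πt/2), cos(πt/2)]] ⊗ 1_A, is a norm-continuous path of 3ε-unitaries in M₂(A) joining diag(u, u*) at t = 0 (up to the identification given by R_0 = I) to diag(uu*, 1) at t = 1; moreover the segment from diag(uu*, 1) to diag(1, 1) consists of 3ε-unitaries. Consequently diag(u, u*) is connected to I₂ through 3ε-unitaries in M₂(A). -/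
open Real

section Stmt13Aux

lemma stmt13_star_fin_two {A : Type*} [NonUnitalSemiring A] [StarRing A] (a b c d : A) :
    star (!![a, b; c, d]) = !![star a, star c; star b, star d] := by
  ext i j
  rw [Matrix.star_eq_conjTranspose]
  fin_cases i <;> fin_cases j <;> simp [Matrix.conjTranspose_apply]

lemma stmt13_sub_fin_two {A : Type*} [AddCommGroup A] (a b c d e f g h : A) :
    !![a, b; c, d] - !![e, f; g, h] = !![a - e, b - f; c - g, d - h] := by
  ext i j
  fin_cases i <;> fin_cases j <;> simp

lemma stmt13_conj_id₁ {M : Type*} [Ring M] [StarRing M] (a b r : M)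
    (h1 : star r * r = 1) (h2 : r * star r = 1) :
    star (a * r * b * star r) * (a * r * b * star r) - 1 =
      (r * star b * star r) * ((star a * a - 1) * (r * b * star r)) +
      r * ((star b * b - 1) * star r) := by
  have e1 : ∀ x : M, star r * (r * x) = x := fun x => by rw [← mul_assoc, h1, one_mul]
  have e2 : ∀ x : M, r * (star r * x) = x := fun x => by rw [← mul_assoc, h2, one_mul]
  simp only [star_mul, star_star, sub_mul, mul_sub, mul_one, one_mul, mul_assoc, e1, e2, h1, h2]
  abel

lemma stmt13_conj_id₂ {M : Type*} [Ring M] [StarRing M] (a b r : M)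
    (h1 : star r * r = 1) (h2 : r * star r = 1) :
    (a * r * b * star r) * star (a * r * b * star r) - 1 =
      (a * r) * ((b * star b - 1) * (star r * star a)) + (a * star a - 1) := by
  have e1 : ∀ x : M, star r * (r * x) = x := fun x => by rw [← mul_assoc, h1, one_mul]
  have e2 : ∀ x : M, r * (star r * x) = x := fun x => by rw [← mul_assoc, h2, one_mul]
  simp only [star_mul, star_star, sub_mul, mul_sub, mul_one, one_mul, mul_assoc, e1, e2, h1, h2]
  abel

variable {A : Type*} [CStarAlgebra A]

lemma stmt13_rot_star (c s : ℝ) :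
    star (!![c • (1:A), (-s) • 1; s • 1, c • 1]) = !![c • (1:A), s • 1; (-s) • 1, c • 1] := by
  rw [stmt13_star_fin_two]
  congr 1 <;> simp [star_smul]

lemma stmt13_rot_unitary₁ {c s : ℝ} (h : c * c + s * s = 1) :
    star (!![c • (1:A), (-s) • 1; s • 1, c • 1]) * !![c • (1:A), (-s) • 1; s • 1, c • 1] = 1 := by
  rw [stmt13_rot_star, Matrix.mul_fin_two, Matrix.one_fin_two]
  simp only [smul_mul_assoc, one_mul, smul_smul, ← add_smul]
  rw [show c * -s + s * c = 0 by ring, show -s * c + c * s = 0 by ring,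
    show -s * -s + c * c = 1 by linear_combination h, h, one_smul, zero_smul]

lemma stmt13_rot_unitary₂ {c s : ℝ} (h : c * c + s * s = 1) :
    !![c • (1:A), (-s) • 1; s • 1, c • 1] * star (!![c • (1:A), (-s) • 1; s • 1, c • 1]) = 1 := by
  rw [stmt13_rot_star, Matrix.mul_fin_two, Matrix.one_fin_two]
  simp only [smul_mul_assoc, one_mul, smul_smul, ← add_smul]
  rw [show c * s + -s * c = 0 by ring, show s * c + c * -s = 0 by ring,
    show c * c + -s * -s = 1 by linear_combination h,
    show s * s + c * c = 1 by linarith, one_smul, zero_smul]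

variable {B : Type*} [CStarAlgebra B] (Φ : Matrix (Fin 2) (Fin 2) A ≃⋆ₐ[ℂ] B)

lemma stmt13_nu_sq (x : Matrix (Fin 2) (Fin 2) A) : ‖Φ x‖ * ‖Φ x‖ = ‖Φ (star x * x)‖ := by
  rw [map_mul, map_star, CStarRing.norm_star_mul_self]

lemma stmt13_nu_sq' (x : Matrix (Fin 2) (Fin 2) A) : ‖Φ x‖ * ‖Φ x‖ = ‖Φ (x * star x)‖ := by
  rw [map_mul, map_star, CStarRing.norm_self_mul_star]

lemma stmt13_nu_mul_le (x y : Matrix (Fin 2) (Fin 2) A) : ‖Φ (x * y)‖ ≤ ‖Φ x‖ * ‖Φ y‖ := by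
  rw [map_mul]; exact norm_mul_le _ _

lemma stmt13_nu_star (x : Matrix (Fin 2) (Fin 2) A) : ‖Φ (star x)‖ = ‖Φ x‖ := by
  rw [map_star, norm_star]

lemma stmt13_nu_one : ‖Φ (1 : Matrix (Fin 2) (Fin 2) A)‖ ≤ 1 := by
  have h := stmt13_nu_sq Φ 1
  rw [star_one, one_mul] at h
  nlinarith [norm_nonneg (Φ (1 : Matrix (Fin 2) (Fin 2) A))]

lemma stmt13_nu_unit {r : Matrix (Fin 2) (Fin 2) A} (h1 : star r * r = 1) : ‖Φ r‖ ≤ 1 := by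
  have h := stmt13_nu_sq Φ r
  rw [h1] at h
  nlinarith [norm_nonneg (Φ r), stmt13_nu_one Φ]

lemma stmt13_nu_one_add {ε : ℝ} {x : Matrix (Fin 2) (Fin 2) A} (hx : ‖Φ x‖ < ε) :
    ‖Φ (1 + x)‖ ≤ 1 + ε := by
  rw [map_add]
  calc ‖Φ 1 + Φ x‖ ≤ ‖Φ (1 : Matrix (Fin 2) (Fin 2) A)‖ + ‖Φ x‖ := norm_add_le _ _
    _ ≤ 1 + ε := add_le_add (stmt13_nu_one Φ) hx.le

lemma stmt13_phi_rsmul (r : ℝ) (y : Matrix (Fin 2) (Fin 2) A) : Φ (r • y) = r • Φ y := by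
  rw [← Complex.coe_smul, map_smul, Complex.coe_smul]

lemma stmt13_nu_rsmul (r : ℝ) (y : Matrix (Fin 2) (Fin 2) A) : ‖Φ (r • y)‖ = |r| * ‖Φ y‖ := by
  rw [stmt13_phi_rsmul, norm_smul, Real.norm_eq_abs]

noncomputable def stmt13_diagHom : A →⋆ₙₐ[ℂ] B where
  toFun a := Φ !![a, 0; 0, a]
  map_add' a b := by
    rw [← map_add]
    exact congrArg Φ (by ext i j; fin_cases i <;> fin_cases j <;> simp)
  map_smul' r a := by
    rw [← map_smul]
    exact congrArg Φ (by ext i j; fin_cases i <;> fin_cases j <;> simp)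
  map_zero' := by
    rw [← map_zero Φ]
    exact congrArg Φ (by ext i j; fin_cases i <;> fin_cases j <;> simp)
  map_mul' a b := by
    rw [← map_mul]
    exact congrArg Φ (by rw [Matrix.mul_fin_two]; simp)
  map_star' a := by
    rw [← map_star]
    exact congrArg Φ (by rw [stmt13_star_fin_two, star_zero])

lemma stmt13_nu_diag (a : A) : ‖Φ !![a, 0; 0, a]‖ ≤ ‖a‖ :=
  NonUnitalStarAlgHom.norm_apply_le (stmt13_diagHom Φ) a

lemma stmt13_nu_e : ‖Φ !![(1:A), 0; 0, 0]‖ ≤ 1 := by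
  have h := stmt13_nu_sq Φ !![(1:A), 0; 0, 0]
  rw [stmt13_star_fin_two, star_one, star_zero, Matrix.mul_fin_two] at h
  simp only [one_mul, mul_zero, zero_mul, add_zero, zero_add, mul_one] at h
  nlinarith [norm_nonneg (Φ !![(1:A), 0; 0, 0])]

lemma stmt13_nu_f : ‖Φ !![(0:A), 0; 0, 1]‖ ≤ 1 := by
  have h := stmt13_nu_sq Φ !![(0:A), 0; 0, 1]
  rw [stmt13_star_fin_two, star_one, star_zero, Matrix.mul_fin_two] at h
  simp only [one_mul, mul_zero, zero_mul, add_zero, zero_add, mul_one] at h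
  nlinarith [norm_nonneg (Φ !![(0:A), 0; 0, 1])]

lemma stmt13_nu_corner1 (a : A) : ‖Φ !![a, 0; 0, (0:A)]‖ ≤ ‖a‖ := by
  have key : !![a, 0; 0, (0:A)] = !![(1:A), 0; 0, 0] * !![a, 0; 0, a] := by
    rw [Matrix.mul_fin_two]; simp
  rw [key]
  calc ‖Φ (!![(1:A), 0; 0, 0] * !![a, 0; 0, a])‖ ≤ ‖Φ !![(1:A), 0; 0, 0]‖ * ‖Φ !![a, 0; 0, a]‖ :=
        stmt13_nu_mul_le Φ _ _
    _ ≤ 1 * ‖a‖ := mul_le_mul (stmt13_nu_e Φ) (stmt13_nu_diag Φ a) (norm_nonneg _) zero_le_one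
    _ = ‖a‖ := one_mul _

lemma stmt13_nu_corner2 (a : A) : ‖Φ !![(0:A), 0; 0, a]‖ ≤ ‖a‖ := by
  have key : !![(0:A), 0; 0, a] = !![(0:A), 0; 0, 1] * !![a, 0; 0, a] := by
    rw [Matrix.mul_fin_two]; simp
  rw [key]
  calc ‖Φ (!![(0:A), 0; 0, 1] * !![a, 0; 0, a])‖ ≤ ‖Φ !![(0:A), 0; 0, 1]‖ * ‖Φ !![a, 0; 0, a]‖ :=
        stmt13_nu_mul_le Φ _ _
    _ ≤ 1 * ‖a‖ := mul_le_mul (stmt13_nu_f Φ) (stmt13_nu_diag Φ a) (norm_nonneg _) zero_le_one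
    _ = ‖a‖ := one_mul _

lemma stmt13_conj_bound₁ {ε : ℝ} (hε0 : 0 < ε) (hε1 : ε < 1) (a b r : Matrix (Fin 2) (Fin 2) A)
    (h1 : star r * r = 1) (h2 : r * star r = 1)
    (haa : ‖Φ (star a * a - 1)‖ < ε) (hbb : ‖Φ (star b * b - 1)‖ < ε) :
    ‖Φ (star (a * r * b * star r) * (a * r * b * star r) - 1)‖ < 3 * ε := by
  have hr : ‖Φ r‖ ≤ 1 := stmt13_nu_unit Φ h1
  have hr' : ‖Φ (star r)‖ ≤ 1 := by rw [stmt13_nu_star]; exact hr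
  have hb2 : ‖Φ b‖ * ‖Φ b‖ ≤ 1 + ε := by
    rw [stmt13_nu_sq Φ b]
    have e : (star b * b : Matrix (Fin 2) (Fin 2) A) = 1 + (star b * b - 1) := by abel
    rw [e]; exact stmt13_nu_one_add Φ hbb
  have t1 : ‖Φ ((r * star b * star r) * ((star a * a - 1) * (r * b * star r)))‖ ≤
      (‖Φ b‖ * ‖Φ b‖) * ‖Φ (star a * a - 1)‖ := by
    have c1 : ‖Φ (r * star b * star r)‖ ≤ ‖Φ b‖ :=
      calc ‖Φ (r * star b * star r)‖ ≤ ‖Φ (r * star b)‖ * ‖Φ (star r)‖ := stmt13_nu_mul_le Φ _ _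
        _ ≤ (‖Φ r‖ * ‖Φ (star b)‖) * ‖Φ (star r)‖ :=
            mul_le_mul_of_nonneg_right (stmt13_nu_mul_le Φ _ _) (norm_nonneg _)
        _ = (‖Φ r‖ * ‖Φ b‖) * ‖Φ (star r)‖ := by rw [stmt13_nu_star Φ b]
        _ ≤ (1 * ‖Φ b‖) * 1 :=
            mul_le_mul (mul_le_mul_of_nonneg_right hr (norm_nonneg _)) hr'
              (norm_nonneg _) (by positivity)
        _ = ‖Φ b‖ := by ring
    have c2 : ‖Φ (r * b * star r)‖ ≤ ‖Φ b‖ :=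
      calc ‖Φ (r * b * star r)‖ ≤ ‖Φ (r * b)‖ * ‖Φ (star r)‖ := stmt13_nu_mul_le Φ _ _
        _ ≤ (‖Φ r‖ * ‖Φ b‖) * ‖Φ (star r)‖ :=
            mul_le_mul_of_nonneg_right (stmt13_nu_mul_le Φ _ _) (norm_nonneg _)
        _ ≤ (1 * ‖Φ b‖) * 1 :=
            mul_le_mul (mul_le_mul_of_nonneg_right hr (norm_nonneg _)) hr'
              (norm_nonneg _) (by positivity)
        _ = ‖Φ b‖ := by ring
    calc ‖Φ ((r * star b * star r) * ((star a * a - 1) * (r * b * star r)))‖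
        ≤ ‖Φ (r * star b * star r)‖ * ‖Φ ((star a * a - 1) * (r * b * star r))‖ :=
          stmt13_nu_mul_le Φ _ _
      _ ≤ ‖Φ (r * star b * star r)‖ * (‖Φ (star a * a - 1)‖ * ‖Φ (r * b * star r)‖) :=
          mul_le_mul_of_nonneg_left (stmt13_nu_mul_le Φ _ _) (norm_nonneg _)
      _ ≤ ‖Φ b‖ * (‖Φ (star a * a - 1)‖ * ‖Φ b‖) :=
          mul_le_mul c1 (mul_le_mul_of_nonneg_left c2 (norm_nonneg _)) (by positivity)
            (norm_nonneg _)
      _ = (‖Φ b‖ * ‖Φ b‖) * ‖Φ (star a * a - 1)‖ := by ring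
  have t2 : ‖Φ (r * ((star b * b - 1) * star r))‖ ≤ ‖Φ (star b * b - 1)‖ := by
    calc ‖Φ (r * ((star b * b - 1) * star r))‖
        ≤ ‖Φ r‖ * (‖Φ (star b * b - 1)‖ * ‖Φ (star r)‖) := by
          refine (stmt13_nu_mul_le Φ _ _).trans ?_
          exact mul_le_mul_of_nonneg_left (stmt13_nu_mul_le Φ _ _) (norm_nonneg _)
      _ ≤ 1 * (‖Φ (star b * b - 1)‖ * 1) :=
          mul_le_mul hr (mul_le_mul_of_nonneg_left hr' (norm_nonneg _)) (by positivity)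
            zero_le_one
      _ = ‖Φ (star b * b - 1)‖ := by ring
  rw [stmt13_conj_id₁ a b r h1 h2, map_add]
  calc ‖Φ ((r * star b * star r) * ((star a * a - 1) * (r * b * star r))) +
        Φ (r * ((star b * b - 1) * star r))‖
      ≤ ‖Φ ((r * star b * star r) * ((star a * a - 1) * (r * b * star r)))‖ +
        ‖Φ (r * ((star b * b - 1) * star r))‖ := norm_add_le _ _
    _ < 3 * ε := by
        have hfin : (‖Φ b‖ * ‖Φ b‖) * ‖Φ (star a * a - 1)‖ ≤ (1 + ε) * ε :=
          mul_le_mul hb2 haa.le (norm_nonneg _) (by positivity)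
        nlinarith [mul_lt_mul_of_pos_left hε1 hε0]

lemma stmt13_conj_bound₂ {ε : ℝ} (hε0 : 0 < ε) (hε1 : ε < 1) (a b r : Matrix (Fin 2) (Fin 2) A)
    (h1 : star r * r = 1) (h2 : r * star r = 1)
    (haa : ‖Φ (a * star a - 1)‖ < ε) (hbb : ‖Φ (b * star b - 1)‖ < ε) :
    ‖Φ ((a * r * b * star r) * star (a * r * b * star r) - 1)‖ < 3 * ε := by
  have hr : ‖Φ r‖ ≤ 1 := stmt13_nu_unit Φ h1
  have hr' : ‖Φ (star r)‖ ≤ 1 := by rw [stmt13_nu_star]; exact hr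
  have ha2 : ‖Φ a‖ * ‖Φ a‖ ≤ 1 + ε := by
    rw [stmt13_nu_sq' Φ a]
    have e : (a * star a : Matrix (Fin 2) (Fin 2) A) = 1 + (a * star a - 1) := by abel
    rw [e]; exact stmt13_nu_one_add Φ haa
  have t1 : ‖Φ ((a * r) * ((b * star b - 1) * (star r * star a)))‖ ≤
      (‖Φ a‖ * ‖Φ a‖) * ‖Φ (b * star b - 1)‖ := by
    have c1 : ‖Φ (a * r)‖ ≤ ‖Φ a‖ :=
      calc ‖Φ (a * r)‖ ≤ ‖Φ a‖ * ‖Φ r‖ := stmt13_nu_mul_le Φ _ _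
        _ ≤ ‖Φ a‖ * 1 := mul_le_mul_of_nonneg_left hr (norm_nonneg _)
        _ = ‖Φ a‖ := mul_one _
    have c2 : ‖Φ (star r * star a)‖ ≤ ‖Φ a‖ :=
      calc ‖Φ (star r * star a)‖ ≤ ‖Φ (star r)‖ * ‖Φ (star a)‖ := stmt13_nu_mul_le Φ _ _
        _ = ‖Φ (star r)‖ * ‖Φ a‖ := by rw [stmt13_nu_star Φ a]
        _ ≤ 1 * ‖Φ a‖ := mul_le_mul_of_nonneg_right hr' (norm_nonneg _)
        _ = ‖Φ a‖ := one_mul _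
    calc ‖Φ ((a * r) * ((b * star b - 1) * (star r * star a)))‖
        ≤ ‖Φ (a * r)‖ * ‖Φ ((b * star b - 1) * (star r * star a))‖ := stmt13_nu_mul_le Φ _ _
      _ ≤ ‖Φ (a * r)‖ * (‖Φ (b * star b - 1)‖ * ‖Φ (star r * star a)‖) :=
          mul_le_mul_of_nonneg_left (stmt13_nu_mul_le Φ _ _) (norm_nonneg _)
      _ ≤ ‖Φ a‖ * (‖Φ (b * star b - 1)‖ * ‖Φ a‖) :=
          mul_le_mul c1 (mul_le_mul_of_nonneg_left c2 (norm_nonneg _)) (by positivity)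
            (norm_nonneg _)
      _ = (‖Φ a‖ * ‖Φ a‖) * ‖Φ (b * star b - 1)‖ := by ring
  rw [stmt13_conj_id₂ a b r h1 h2, map_add]
  calc ‖Φ ((a * r) * ((b * star b - 1) * (star r * star a))) + Φ (a * star a - 1)‖
      ≤ ‖Φ ((a * r) * ((b * star b - 1) * (star r * star a)))‖ + ‖Φ (a * star a - 1)‖ :=
        norm_add_le _ _
    _ < 3 * ε := by
        have hfin : (‖Φ a‖ * ‖Φ a‖) * ‖Φ (b * star b - 1)‖ ≤ (1 + ε) * ε :=
          mul_le_mul ha2 hbb.le (norm_nonneg _) (by positivity)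
        nlinarith [mul_lt_mul_of_pos_left hε1 hε0]

lemma stmt13_seg_bound {ε : ℝ} (hε0 : 0 < ε) (hε1 : ε < 1) {u : A}
    (hu2 : ‖u * star u - 1‖ < ε) {s : ℝ} (hs : s ∈ Set.Icc (0:ℝ) 1) :
    ‖Φ (star ((1 - s) • (!![u * star u, 0; 0, (1 : A)] : Matrix (Fin 2) (Fin 2) A) + s • 1) *
          ((1 - s) • (!![u * star u, 0; 0, (1 : A)] : Matrix (Fin 2) (Fin 2) A) + s • 1) -
          1)‖ < 3 * ε ∧
    ‖Φ (((1 - s) • (!![u * star u, 0; 0, (1 : A)] : Matrix (Fin 2) (Fin 2) A) + s • 1) *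
          star ((1 - s) • (!![u * star u, 0; 0, (1 : A)] : Matrix (Fin 2) (Fin 2) A) + s • 1) -
          1)‖ < 3 * ε := by
  obtain ⟨hs0, hs1⟩ := hs
  set E : Matrix (Fin 2) (Fin 2) A := !![u * star u - 1, 0; 0, 0] with hE
  have hx : (1 - s) • (!![u * star u, 0; 0, (1 : A)]) + s • (1 : Matrix (Fin 2) (Fin 2) A)
      = 1 + (1 - s) • E := by
    have hP : (!![u * star u, 0; 0, (1 : A)]) = 1 + E := by
      ext i j; fin_cases i <;> fin_cases j <;> simp [hE]
    rw [hP]; module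
  have hEstar : star E = E := by
    rw [hE, stmt13_star_fin_two, star_zero, star_sub, star_one, star_mul, star_star]
  have hxstar : star ((1 : Matrix (Fin 2) (Fin 2) A) + (1 - s) • E) = 1 + (1 - s) • E := by
    rw [star_add, star_one, ← Complex.coe_smul, star_smul, hEstar, Complex.star_def,
      Complex.conj_ofReal, Complex.coe_smul]
  have hsq : ((1 : Matrix (Fin 2) (Fin 2) A) + (1 - s) • E) * (1 + (1 - s) • E) - 1 =
      (2 * (1 - s)) • E + ((1 - s) * (1 - s)) • (E * E) := by
    simp only [mul_add, add_mul, one_mul, mul_one, smul_mul_assoc, mul_smul_comm, smul_smul]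
    module
  have hEn : ‖Φ E‖ < ε := lt_of_le_of_lt (stmt13_nu_corner1 Φ _) hu2
  have hEE : ‖Φ (E * E)‖ ≤ ‖Φ E‖ * ‖Φ E‖ := stmt13_nu_mul_le Φ _ _
  have main : ‖Φ (((1 : Matrix (Fin 2) (Fin 2) A) + (1 - s) • E) * (1 + (1 - s) • E) - 1)‖
      < 3 * ε := by
    rw [hsq, map_add]
    calc ‖Φ ((2 * (1 - s)) • E) + Φ (((1 - s) * (1 - s)) • (E * E))‖
        ≤ ‖Φ ((2 * (1 - s)) • E)‖ + ‖Φ (((1 - s) * (1 - s)) • (E * E))‖ := norm_add_le _ _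
      _ = |2 * (1 - s)| * ‖Φ E‖ + |(1 - s) * (1 - s)| * ‖Φ (E * E)‖ := by
          rw [stmt13_nu_rsmul, stmt13_nu_rsmul]
      _ < 3 * ε := by
          rw [abs_of_nonneg (by linarith : (0:ℝ) ≤ 2 * (1 - s)),
            abs_of_nonneg (by nlinarith : (0:ℝ) ≤ (1 - s) * (1 - s))]
          have hN0 := norm_nonneg (Φ E)
          have hM0 := norm_nonneg (Φ (E * E))
          have e1 : 2 * (1 - s) * ‖Φ E‖ ≤ 2 * ‖Φ E‖ := by nlinarith
          have e2 : (1 - s) * (1 - s) * ‖Φ (E * E)‖ ≤ ‖Φ (E * E)‖ := by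
            nlinarith [mul_nonneg hM0 (show (0:ℝ) ≤ 1 - (1 - s) * (1 - s) by nlinarith)]
          have e3 : ‖Φ (E * E)‖ ≤ ε * ε := hEE.trans (mul_self_le_mul_self hN0 hEn.le)
          have e4 : ε * ε < ε * 1 := mul_lt_mul_of_pos_left hε1 hε0
          linarith
  refine ⟨?_, ?_⟩ <;> rw [hx, hxstar] <;> exact main

end Stmt13Aux



/-- Let `A` be a unital C*-algebra, `0 < ε < 1/12`, and let `u ∈ A` be an ε-unitary.  Then in
`M₂(A)`, the path `t ↦ diag(1, u) · R t · diag(1, u*) · (R t)*`, where `R t` is the rotation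
matrix `[[cos(πt/2), −sin(πt/2)],[sin(πt/2), cos(πt/2)]] ⊗ 1_A`, is a norm-continuous path of
3ε-unitaries in `M₂(A)` joining `diag(u, u*)` (up to the identification given by `R 0 = I`) to
`diag(uu*, 1)`; moreover the segment from `diag(uu*, 1)` to `diag(1, 1)` consists of
3ε-unitaries.  Consequently `diag(u, u*)` is connected to `I₂` through 3ε-unitaries in
`M₂(A)`.

The C*-norm on `M₂(A)` is encoded through an arbitrary ⋆-algebra isomorphism
`Φ : M₂(A) ≃⋆ₐ[ℂ] B` onto a C*-algebra `B` (such a C*-norm is unique). -/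
theorem stmt13 {A B : Type*} [CStarAlgebra A] [CStarAlgebra B]
    (Φ : Matrix (Fin 2) (Fin 2) A ≃⋆ₐ[ℂ] B)
    {ε : ℝ} (hε0 : 0 < ε) (hε : ε < 1 / 12)
    {u : A} (hu1 : ‖star u * u - 1‖ < ε) (hu2 : ‖u * star u - 1‖ < ε)
    (R : ℝ → Matrix (Fin 2) (Fin 2) A)
    (hR : ∀ t : ℝ, R t =
      !![Real.cos (Real.pi * t / 2) • (1 : A), (-Real.sin (Real.pi * t / 2)) • (1 : A);
         Real.sin (Real.pi * t / 2) • (1 : A), Real.cos (Real.pi * t / 2) • (1 : A)])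
    (g : ℝ → Matrix (Fin 2) (Fin 2) A)
    (hg : ∀ t : ℝ, g t = !![(1 : A), 0; 0, u] * R t * !![(1 : A), 0; 0, star u] * star (R t)) :
    -- the path is norm-continuous and consists of 3ε-unitaries:
    Continuous (fun t : ℝ => Φ (g t)) ∧
    (∀ t ∈ Set.Icc (0 : ℝ) 1,
      ‖Φ (star (g t) * g t - 1)‖ < 3 * ε ∧ ‖Φ (g t * star (g t) - 1)‖ < 3 * ε) ∧
    -- the segment from diag(uu*, 1) to the identity consists of 3ε-unitaries:
    (∀ s ∈ Set.Icc (0 : ℝ) 1,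
      ‖Φ (star ((1 - s) • (!![u * star u, 0; 0, (1 : A)] : Matrix (Fin 2) (Fin 2) A) + s • 1) *
            ((1 - s) • (!![u * star u, 0; 0, (1 : A)] : Matrix (Fin 2) (Fin 2) A) + s • 1) -
            1)‖ < 3 * ε ∧
      ‖Φ (((1 - s) • (!![u * star u, 0; 0, (1 : A)] : Matrix (Fin 2) (Fin 2) A) + s • 1) *
            star ((1 - s) • (!![u * star u, 0; 0, (1 : A)] : Matrix (Fin 2) (Fin 2) A) + s • 1) -
            1)‖ < 3 * ε) ∧
    -- consequently diag(u, u*) is connected to I₂ through 3ε-unitaries: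
    ∃ h : ℝ → Matrix (Fin 2) (Fin 2) A,
      Continuous (fun t : ℝ => Φ (h t)) ∧
      h 0 = !![u, 0; 0, star u] ∧ h 1 = 1 ∧
      ∀ t ∈ Set.Icc (0 : ℝ) 1,
        ‖Φ (star (h t) * h t - 1)‖ < 3 * ε ∧ ‖Φ (h t * star (h t) - 1)‖ < 3 * ε := by
  have hε1 : ε < 1 := by linarith
  have hπ : ∀ τ : ℝ, Real.cos (Real.pi * τ / 2) * Real.cos (Real.pi * τ / 2) +
      Real.sin (Real.pi * τ / 2) * Real.sin (Real.pi * τ / 2) = 1 := fun τ => by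
    nlinarith [Real.sin_sq_add_cos_sq (Real.pi * τ / 2)]
  have hR1 : ∀ τ : ℝ, star (R τ) * R τ = 1 := fun τ => by
    rw [hR τ]; exact stmt13_rot_unitary₁ (hπ τ)
  have hR2 : ∀ τ : ℝ, R τ * star (R τ) = 1 := fun τ => by
    rw [hR τ]; exact stmt13_rot_unitary₂ (hπ τ)
  -- star computations for diagonal matrices
  have sa : star (!![(1:A), 0; 0, u]) = !![(1:A), 0; 0, star u] := by
    rw [stmt13_star_fin_two, star_one, star_zero]
  have sb : star (!![(1:A), 0; 0, star u]) = !![(1:A), 0; 0, u] := by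
    rw [stmt13_star_fin_two, star_one, star_zero, star_star]
  have sa2 : star (!![u, 0; 0, (1:A)]) = !![star u, 0; 0, (1:A)] := by
    rw [stmt13_star_fin_two, star_one, star_zero]
  have csub₂ : ∀ v w : A, !![(1:A), 0; 0, v] * !![(1:A), 0; 0, w] - 1 =
      !![(0:A), 0; 0, v * w - 1] := fun v w => by
    rw [Matrix.mul_fin_two, Matrix.one_fin_two, stmt13_sub_fin_two]; simp
  have csub₁ : ∀ v w : A, !![v, 0; 0, (1:A)] * !![w, 0; 0, (1:A)] - 1 =
      !![v * w - 1, 0; 0, (0:A)] := fun v w => by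
    rw [Matrix.mul_fin_two, Matrix.one_fin_two, stmt13_sub_fin_two]; simp
  -- the six norm estimates
  have n1 : ‖Φ (star (!![(1:A), 0; 0, u]) * !![(1:A), 0; 0, u] - 1)‖ < ε := by
    rw [sa, csub₂]; exact lt_of_le_of_lt (stmt13_nu_corner2 Φ _) hu1
  have n2 : ‖Φ (!![(1:A), 0; 0, u] * star (!![(1:A), 0; 0, u]) - 1)‖ < ε := by
    rw [sa, csub₂]; exact lt_of_le_of_lt (stmt13_nu_corner2 Φ _) hu2
  have n3 : ‖Φ (star (!![(1:A), 0; 0, star u]) * !![(1:A), 0; 0, star u] - 1)‖ < ε := by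
    rw [sb, csub₂]; exact lt_of_le_of_lt (stmt13_nu_corner2 Φ _) hu2
  have n4 : ‖Φ (!![(1:A), 0; 0, star u] * star (!![(1:A), 0; 0, star u]) - 1)‖ < ε := by
    rw [sb, csub₂]; exact lt_of_le_of_lt (stmt13_nu_corner2 Φ _) hu1
  have n5 : ‖Φ (star (!![u, 0; 0, (1:A)]) * !![u, 0; 0, (1:A)] - 1)‖ < ε := by
    rw [sa2, csub₁]; exact lt_of_le_of_lt (stmt13_nu_corner1 Φ _) hu1
  have n6 : ‖Φ (!![u, 0; 0, (1:A)] * star (!![u, 0; 0, (1:A)]) - 1)‖ < ε := by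
    rw [sa2, csub₁]; exact lt_of_le_of_lt (stmt13_nu_corner1 Φ _) hu2
  -- continuity ingredients
  have hRdecomp : ∀ τ : ℝ, R τ = Real.cos (Real.pi * τ / 2) • (1 : Matrix (Fin 2) (Fin 2) A) +
      Real.sin (Real.pi * τ / 2) • !![(0:A), -1; 1, 0] := fun τ => by
    rw [hR τ]; ext i j; fin_cases i <;> fin_cases j <;> simp
  have hRsdecomp : ∀ τ : ℝ, star (R τ) =
      Real.cos (Real.pi * τ / 2) • (1 : Matrix (Fin 2) (Fin 2) A) -
      Real.sin (Real.pi * τ / 2) • !![(0:A), -1; 1, 0] := fun τ => by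
    rw [hR τ, stmt13_rot_star]; ext i j; fin_cases i <;> fin_cases j <;> simp
  have hΦR : ∀ τ : ℝ, Φ (R τ) = Real.cos (Real.pi * τ / 2) • (1 : B) +
      Real.sin (Real.pi * τ / 2) • Φ !![(0:A), -1; 1, 0] := fun τ => by
    rw [hRdecomp τ, map_add, stmt13_phi_rsmul, stmt13_phi_rsmul, map_one]
  have hΦRs : ∀ τ : ℝ, Φ (star (R τ)) = Real.cos (Real.pi * τ / 2) • (1 : B) -
      Real.sin (Real.pi * τ / 2) • Φ !![(0:A), -1; 1, 0] := fun τ => by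
    rw [hRsdecomp τ, map_sub, stmt13_phi_rsmul, stmt13_phi_rsmul, map_one]
  have contΦR : Continuous fun τ : ℝ => Φ (R τ) := by
    simp only [hΦR]; fun_prop
  have contΦRs : Continuous fun τ : ℝ => Φ (star (R τ)) := by
    simp only [hΦRs]; fun_prop
  refine ⟨?_, ?_, ?_, ?_⟩
  · -- continuity of g
    simp only [hg, map_mul]
    exact ((continuous_const.mul contΦR).mul continuous_const).mul contΦRs
  · -- g is a path of 3ε-unitaries
    intro t _
    rw [hg t]
    exact ⟨stmt13_conj_bound₁ Φ hε0 hε1 _ _ _ (hR1 t) (hR2 t) n1 n3,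
      stmt13_conj_bound₂ Φ hε0 hε1 _ _ _ (hR1 t) (hR2 t) n2 n4⟩
  · -- the segment
    intro s hs
    exact stmt13_seg_bound Φ hε0 hε1 hu2 hs
  · -- the full path h
    refine ⟨fun t => if t ≤ 1/2 then
        !![u, 0; 0, (1:A)] * R (2*t) * !![(1:A), 0; 0, star u] * star (R (2*t))
      else (1 - (2*t - 1)) • !![u * star u, 0; 0, (1:A)] + (2*t - 1) • 1, ?_, ?_, ?_, ?_⟩
    · -- continuity
      have hbdy : ∀ t : ℝ, t = 1/2 →
          Φ (!![u, 0; 0, (1:A)] * R (2*t) * !![(1:A), 0; 0, star u] * star (R (2*t))) =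
          Φ ((1 - (2*t - 1)) • !![u * star u, 0; 0, (1:A)] + (2*t - 1) • 1) := by
        intro t ht
        subst ht
        rw [show (2:ℝ) * (1/2) = 1 by norm_num]
        have hRone : R 1 = !![(0:A), -1; 1, 0] := by
          rw [hR 1]
          rw [show Real.pi * 1 / 2 = Real.pi / 2 by ring, Real.cos_pi_div_two,
            Real.sin_pi_div_two]
          ext i j; fin_cases i <;> fin_cases j <;> simp
        have hRone' : star (R 1) = !![(0:A), 1; -1, 0] := by
          rw [hRone, stmt13_star_fin_two, star_zero, star_one, star_neg, star_one]
        refine congrArg Φ ?_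
        rw [hRone', hRone]
        rw [show (1:ℝ) - (1 - 1) = 1 by norm_num, show (1:ℝ) - 1 = 0 by norm_num,
          one_smul, zero_smul, add_zero]
        rw [Matrix.mul_fin_two, Matrix.mul_fin_two, Matrix.mul_fin_two]
        simp
      have hcontk : Continuous fun t : ℝ =>
          Φ (!![u, 0; 0, (1:A)] * R (2*t) * !![(1:A), 0; 0, star u] * star (R (2*t))) := by
        simp only [map_mul]
        exact ((continuous_const.mul
            (contΦR.comp (continuous_const.mul continuous_id))).mul continuous_const).mul
          (contΦRs.comp (continuous_const.mul continuous_id))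
      have hcontseg : Continuous fun t : ℝ =>
          Φ ((1 - (2*t - 1)) • !![u * star u, 0; 0, (1:A)] + (2*t - 1) • 1) := by
        simp only [map_add, stmt13_phi_rsmul]
        fun_prop
      show Continuous fun t : ℝ => Φ (if t ≤ 1/2 then
          !![u, 0; 0, (1:A)] * R (2*t) * !![(1:A), 0; 0, star u] * star (R (2*t))
        else (1 - (2*t - 1)) • !![u * star u, 0; 0, (1:A)] + (2*t - 1) • 1)
      have heq : (fun t : ℝ => Φ (if t ≤ 1/2 then
          !![u, 0; 0, (1:A)] * R (2*t) * !![(1:A), 0; 0, star u] * star (R (2*t))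
        else (1 - (2*t - 1)) • !![u * star u, 0; 0, (1:A)] + (2*t - 1) • 1)) =
          fun t : ℝ => if t ≤ 1/2 then
            Φ (!![u, 0; 0, (1:A)] * R (2*t) * !![(1:A), 0; 0, star u] * star (R (2*t)))
          else Φ ((1 - (2*t - 1)) • !![u * star u, 0; 0, (1:A)] + (2*t - 1) • 1) :=
        funext fun t => apply_ite Φ _ _ _
      rw [heq]
      exact Continuous.if_le hcontk hcontseg continuous_id continuous_const hbdy
    · -- value at 0
      beta_reduce
      rw [if_pos (by norm_num : (0:ℝ) ≤ 1/2), show (2:ℝ) * 0 = 0 by norm_num]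
      have hR0 : R 0 = 1 := by
        rw [hR 0, show Real.pi * 0 / 2 = 0 by ring, Real.cos_zero, Real.sin_zero,
          Matrix.one_fin_two]
        ext i j; fin_cases i <;> fin_cases j <;> simp
      rw [hR0, mul_one, star_one, mul_one, Matrix.mul_fin_two]
      simp
    · -- value at 1
      beta_reduce
      rw [if_neg (by norm_num : ¬ (1:ℝ) ≤ 1/2)]
      norm_num
    · -- 3ε-unitaries
      intro t ht
      beta_reduce
      by_cases hc : t ≤ 1/2
      · simp only [if_pos hc]
        exact ⟨stmt13_conj_bound₁ Φ hε0 hε1 _ _ _ (hR1 (2*t)) (hR2 (2*t)) n5 n3,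
          stmt13_conj_bound₂ Φ hε0 hε1 _ _ _ (hR1 (2*t)) (hR2 (2*t)) n6 n4⟩
      · simp only [if_neg hc]
        exact stmt13_seg_bound Φ hε0 hε1 hu2
          ⟨by linarith [not_le.mp hc], by linarith [ht.2]⟩
end

section
/- Let Γ be a finitely generated group with word length ℓ and let d > 0. Suppose φ : P_d(Γ) → [0,1] is a continuous function on the d-Rips complex, compactly supported in W_d(Γ) (measures supported in the ball B(e,2d)), with Σ_{γ∈Γ} φ(γ·x) = 1 for every x ∈ P_d(Γ). Then the function e_φ : Γ → C₀(P_d(Γ)) given by e_φ(γ)(x) = φ(x)^{1/2} · φ(γ⁻¹ x)^{1/2} defines a self-adjoint idempotent (projection) in the reduced crossed product C₀(P_d(Γ)) ⋊ᵣ Γ, whose support {γ : e_φ(γ) ≠ 0} is contained in {γ : γ W_d(Γ) ∩ W_d(Γ) ≠ ∅}. -/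
open scoped ENNReal

/-- The `d`-Rips complex of a group `Γ` with length function `ℓ`: finitely supported
probability measures on `Γ` whose support has diameter at most `d` for the (left-invariant)
metric induced by `ℓ`. -/
def RipsCplx (Γ : Type*) [Group Γ] (ℓ : Γ → ℝ) (d : ℝ) : Type _ :=
  {h : Γ →₀ ℝ // (∀ γ, 0 ≤ h γ) ∧ (h.sum fun _ x => x) = 1 ∧
    ∀ γ ∈ h.support, ∀ γ' ∈ h.support, ℓ (γ⁻¹ * γ') ≤ d}

namespace RipsCplx

variable {Γ : Type*} [Group Γ] {ℓ : Γ → ℝ} {d : ℝ}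

/-- The canonical embedding of the Rips complex into `ℓ^∞(Γ)`, inducing the sup-norm
distance. -/
noncomputable def toLinf (h : RipsCplx Γ ℓ d) : lp (fun _ : Γ => ℝ) ∞ :=
  ⟨fun γ => h.1 γ, memℓp_infty <| by
    have hsub : (Set.range fun γ => ‖h.1 γ‖) ⊆
        insert (0 : ℝ) ((fun γ => ‖h.1 γ‖) '' ↑h.1.support) := by
      rintro x ⟨γ, rfl⟩
      by_cases hγ : γ ∈ h.1.support
      · exact Set.mem_insert_of_mem _ ⟨γ, hγ, rfl⟩
      · simp [Finsupp.notMem_support_iff.mp hγ]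
    exact Set.Finite.bddAbove <|
      ((h.1.support.finite_toSet.image _).insert _).subset hsub⟩

theorem toLinf_injective : Function.Injective (toLinf (Γ := Γ) (ℓ := ℓ) (d := d)) := by
  intro h g hhg
  have hfun : ∀ γ, h.1 γ = g.1 γ := fun γ => congrFun (congrArg Subtype.val hhg) γ
  exact Subtype.ext (Finsupp.ext hfun)

/-- The sup-norm metric on the Rips complex. -/
noncomputable instance : MetricSpace (RipsCplx Γ ℓ d) :=
  MetricSpace.induced toLinf toLinf_injective inferInstance

/-- Left translation action of `Γ` on the Rips complex: `(γ • h)(γ') = h (γ⁻¹ γ')`. -/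
noncomputable def translate (γ : Γ) (h : RipsCplx Γ ℓ d) : RipsCplx Γ ℓ d :=
  ⟨Finsupp.equivMapDomain (Equiv.mulLeft γ) h.1, by
    intro y
    rw [Finsupp.equivMapDomain_apply]
    exact h.2.1 _, by
    rw [Finsupp.sum_equivMapDomain]
    exact h.2.2.1, by
    intro a ha b hb
    rw [Finsupp.mem_support_iff, Finsupp.equivMapDomain_apply] at ha hb
    have := h.2.2.2 _ (Finsupp.mem_support_iff.mpr ha) _ (Finsupp.mem_support_iff.mpr hb)
    simp only [Equiv.mulLeft_symm, Equiv.coe_mulLeft] at this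
    calc ℓ (a⁻¹ * b) = ℓ ((γ⁻¹ * a)⁻¹ * (γ⁻¹ * b)) := by group
    _ ≤ d := this⟩

/-- The subset `W_d(Γ)` of the Rips complex: measures supported in the ball `B(e, 2d)`. -/
def Wset (Γ : Type*) [Group Γ] (ℓ : Γ → ℝ) (d : ℝ) : Set (RipsCplx Γ ℓ d) :=
  {h | ∀ γ ∈ h.1.support, ℓ γ ≤ 2 * d}

/-- The subset `V_d(Γ)` of the Rips complex: measures supported in the ball `B(e, d)`. -/
def Vset (Γ : Type*) [Group Γ] (ℓ : Γ → ℝ) (d : ℝ) : Set (RipsCplx Γ ℓ d) :=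
  {h | ∀ γ ∈ h.1.support, ℓ γ ≤ d}

end RipsCplx

/-!
The twisted-convolution square of `e_φ` at `γ` is `∑ γ₁, √φ(x) √φ(γ₁⁻¹x)² √φ(γ⁻¹x)`, because
the two middle factors are evaluated at the same point `γ₁⁻¹x`; the middle square is `φ(γ₁⁻¹x)`
and these sum to `1` over `γ₁`. Self-adjointness is the symmetry of `√φ(x) √φ(γ⁻¹x)` under
`(γ, x) ↦ (γ⁻¹, γ⁻¹x)`, and `e_φ(γ)(x) ≠ 0` puts both `x` and `γ⁻¹x` in the support of `φ`.
-/

namespace RipsCplx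

variable {Γ : Type*} [Group Γ] {ℓ : Γ → ℝ} {d : ℝ}

theorem translate_one (x : RipsCplx Γ ℓ d) : translate 1 x = x :=
  Subtype.ext <| Finsupp.ext fun γ => by
    simp only [translate, Finsupp.equivMapDomain_apply, Equiv.mulLeft_symm, Equiv.coe_mulLeft,
      inv_one, one_mul]

theorem translate_mul (a b : Γ) (x : RipsCplx Γ ℓ d) :
    translate (a * b) x = translate a (translate b x) :=
  Subtype.ext <| Finsupp.ext fun γ => by
    simp only [translate, Finsupp.equivMapDomain_apply, Equiv.mulLeft_symm, Equiv.coe_mulLeft,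
      mul_inv_rev, mul_assoc]

noncomputable instance : MulAction Γ (RipsCplx Γ ℓ d) where
  smul := translate
  one_smul := translate_one
  mul_smul := translate_mul

theorem translate_eq_smul (γ : Γ) (x : RipsCplx Γ ℓ d) : translate γ x = γ • x := rfl

end RipsCplx

section PartitionProjection

variable {G X : Type*} [Group G] [MulAction G X]

noncomputable def partitionProjection (φ : X → ℝ) (γ : G) (x : X) : ℝ :=
  Real.sqrt (φ x) * Real.sqrt (φ (γ⁻¹ • x))

variable {φ : X → ℝ}

theorem partitionProjection_inv_inv_smul (γ : G) (x : X) :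
    partitionProjection φ γ⁻¹ (γ⁻¹ • x) = partitionProjection φ γ x := by
  simp only [partitionProjection, inv_inv, smul_inv_smul, mul_comm]

theorem partitionProjection_mul_partitionProjection (hφ : ∀ x, 0 ≤ φ x) (γ γ₁ : G) (x : X) :
    partitionProjection φ γ₁ x * partitionProjection φ (γ₁⁻¹ * γ) (γ₁⁻¹ • x) =
      partitionProjection φ γ x * φ (γ₁⁻¹ • x) := by
  have hsmul : (γ₁⁻¹ * γ)⁻¹ • γ₁⁻¹ • x = γ⁻¹ • x := by rw [smul_smul]; group
  simp only [partitionProjection, hsmul]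
  linear_combination (Real.sqrt (φ x) * Real.sqrt (φ (γ⁻¹ • x))) *
    Real.mul_self_sqrt (hφ (γ₁⁻¹ • x))

theorem tsum_partitionProjection_mul_partitionProjection (hφ : ∀ x, 0 ≤ φ x)
    (hpart : ∀ x, ∑' γ : G, φ (γ • x) = 1) (γ : G) (x : X) :
    ∑' γ₁ : G, partitionProjection φ γ₁ x * partitionProjection φ (γ₁⁻¹ * γ) (γ₁⁻¹ • x) =
      partitionProjection φ γ x := by
  have hpart_inv : ∑' γ₁ : G, φ (γ₁⁻¹ • x) = 1 :=
    ((Equiv.inv G).tsum_eq fun γ₁ => φ (γ₁ • x)).trans (hpart x)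
  simp only [partitionProjection_mul_partitionProjection hφ, tsum_mul_left, hpart_inv, mul_one]

theorem mem_support_of_partitionProjection_ne_zero {γ : G} {x : X}
    (h : partitionProjection φ γ x ≠ 0) :
    x ∈ Function.support φ ∧ γ⁻¹ • x ∈ Function.support φ := by
  constructor <;> intro hzero <;> simp_all [partitionProjection]

end PartitionProjection

open RipsCplx in
theorem stmt17_general {Γ : Type*} [Group Γ] (ℓ : Γ → ℝ)
    {d : ℝ}
    (φ : RipsCplx Γ ℓ d → ℝ)
    (hφrange : ∀ x, φ x ∈ Set.Icc (0 : ℝ) 1)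
    (hφsupp : tsupport φ ⊆ Wset Γ ℓ d)
    (hφpart : ∀ x : RipsCplx Γ ℓ d, ∑' γ : Γ, φ (translate γ x) = 1)
    (e : Γ → RipsCplx Γ ℓ d → ℝ)
    (he : ∀ (γ : Γ) (x : RipsCplx Γ ℓ d),
      e γ x = Real.sqrt (φ x) * Real.sqrt (φ (translate γ⁻¹ x))) :
    -- `e_φ` is idempotent for the twisted convolution product:
    (∀ (γ : Γ) (x : RipsCplx Γ ℓ d),
      ∑' γ₁ : Γ, e γ₁ x * e (γ₁⁻¹ * γ) (translate γ₁⁻¹ x) = e γ x) ∧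
    -- `e_φ` is self-adjoint:
    (∀ (γ : Γ) (x : RipsCplx Γ ℓ d), e γ⁻¹ (translate γ⁻¹ x) = e γ x) ∧
    -- the support of `e_φ` is contained in `{γ : γ W_d(Γ) ∩ W_d(Γ) ≠ ∅}`:
    (∀ γ : Γ, (∃ x, e γ x ≠ 0) →
      ∃ y ∈ Wset Γ ℓ d, translate γ y ∈ Wset Γ ℓ d) := by
  obtain rfl : e = partitionProjection φ := funext₂ he
  simp only [translate_eq_smul] at hφpart ⊢
  refine ⟨tsum_partitionProjection_mul_partitionProjection (fun x => (hφrange x).1) hφpart,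
    partitionProjection_inv_inv_smul, ?_⟩
  rintro γ ⟨x, hx⟩
  obtain ⟨hx_supp, hγx_supp⟩ := mem_support_of_partitionProjection_ne_zero hx
  exact ⟨γ⁻¹ • x, hφsupp (subset_tsupport φ hγx_supp),
    (smul_inv_smul γ x).symm ▸ hφsupp (subset_tsupport φ hx_supp)⟩

open RipsCplx in
/-- Let `Γ` be a finitely generated group with word length `ℓ` (a proper length function) and
`d > 0`.  Suppose `φ : P_d(Γ) → [0,1]` is continuous, compactly supported in `W_d(Γ)`, with
`∑_{γ∈Γ} φ(γ·x) = 1` for every `x ∈ P_d(Γ)`.  Then the function `e_φ : Γ → C₀(P_d(Γ))` given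
by `e_φ(γ)(x) = φ(x)^{1/2} · φ(γ⁻¹ x)^{1/2}` defines a self-adjoint idempotent (projection) in
the reduced crossed product `C₀(P_d(Γ)) ⋊ᵣ Γ`: it satisfies `e_φ * e_φ = e_φ` for the twisted
convolution `(f*g)(γ)(x) = ∑_{γ₁} f(γ₁)(x)·g(γ₁⁻¹γ)(γ₁⁻¹ x)` and `e_φ* = e_φ` for the
involution `f*(γ)(x) = f(γ⁻¹)(γ⁻¹ x)` (the functions being real valued); and its support
`{γ : e_φ(γ) ≠ 0}` is contained in `{γ : γ W_d(Γ) ∩ W_d(Γ) ≠ ∅}`. -/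
theorem stmt17 {Γ : Type*} [Group Γ] (ℓ : Γ → ℝ)
    (hnonneg : ∀ γ : Γ, 0 ≤ ℓ γ)
    (hzero : ∀ γ : Γ, ℓ γ = 0 ↔ γ = 1)
    (hsub : ∀ γ γ' : Γ, ℓ (γ * γ') ≤ ℓ γ + ℓ γ')
    (hsymm : ∀ γ : Γ, ℓ γ⁻¹ = ℓ γ)
    (hproper : ∀ r : ℝ, {γ : Γ | ℓ γ ≤ r}.Finite)
    {d : ℝ} (hd : 0 < d)
    (φ : RipsCplx Γ ℓ d → ℝ) (hφcont : Continuous φ)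
    (hφrange : ∀ x, φ x ∈ Set.Icc (0 : ℝ) 1)
    (hφcs : HasCompactSupport φ) (hφsupp : tsupport φ ⊆ Wset Γ ℓ d)
    (hφpart : ∀ x : RipsCplx Γ ℓ d, ∑' γ : Γ, φ (translate γ x) = 1)
    (e : Γ → RipsCplx Γ ℓ d → ℝ)
    (he : ∀ (γ : Γ) (x : RipsCplx Γ ℓ d),
      e γ x = Real.sqrt (φ x) * Real.sqrt (φ (translate γ⁻¹ x))) :
    -- `e_φ` is idempotent for the twisted convolution product:
    (∀ (γ : Γ) (x : RipsCplx Γ ℓ d),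
      ∑' γ₁ : Γ, e γ₁ x * e (γ₁⁻¹ * γ) (translate γ₁⁻¹ x) = e γ x) ∧
    -- `e_φ` is self-adjoint:
    (∀ (γ : Γ) (x : RipsCplx Γ ℓ d), e γ⁻¹ (translate γ⁻¹ x) = e γ x) ∧
    -- the support of `e_φ` is contained in `{γ : γ W_d(Γ) ∩ W_d(Γ) ≠ ∅}`:
    (∀ γ : Γ, (∃ x, e γ x ≠ 0) →
      ∃ y ∈ Wset Γ ℓ d, translate γ y ∈ Wset Γ ℓ d) :=
  stmt17_general ℓ φ hφrange hφsupp hφpart e he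
end
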